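/- Let A : [0,T) → gl_n(ℝ) solve A' = -tr(S(A)²)·A + (1/2)[A,[A,Aᵗ]] - (1/2)tr(A)·[A,Aᵗ] on its maximal interval of existence [0,T). Then T = ∞, i.e. the solution exists for all t ≥ 0. -/

import Mathlib

open Matrix Filter

noncomputable section

abbrev Mat (n : ℕ) := Matrix (Fin n) (Fin n) ℝ

/-- Commutator bracket of matrices. -/
def bkt {n : ℕ} (X Y : Mat n) : Mat n := X * Y - Y * X

/-- Frobenius inner product ⟨X,Y⟩ = tr(XYᵗ). -/
def frob {n : ℕ} (X Y : Mat n) : ℝ := Matrix.trace (X * Yᵀ)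

/-- Squared Frobenius norm ‖X‖² = tr(XXᵗ). -/
def sqnorm {n : ℕ} (X : Mat n) : ℝ := frob X X

/-- Symmetric part S(X) = (X+Xᵗ)/2. -/
def symPart {n : ℕ} (X : Mat n) : Mat n := (1/2 : ℝ) • (X + Xᵀ)

/-- Right-hand side of the bracket flow ODE. -/
def rhs {n : ℕ} (A : Mat n) : Mat n :=
  (-(Matrix.trace (symPart A * symPart A))) • A
    + (1/2 : ℝ) • bkt A (bkt A Aᵀ)
    - ((1/2 : ℝ) * Matrix.trace A) • bkt A Aᵀ


/-! Along the flow `‖A‖²` is non-increasing, by the energy identity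
`⟪A, rhs A⟫ = -‖S(A)‖² ‖A‖² - ½ ‖[A, Aᵀ]‖²`. Multiplying the field by a bump function equal to `1`
on the ball of radius `‖A₀‖ + 1` keeps `⟪x, F x⟫ ≤ 0` and makes the field globally Lipschitz and
bounded, so the cut-off flow exists for all times (Picard–Lindelöf on `[-T, T]`, glued by
uniqueness). For `t ≥ 0` its norm stays at most `‖A₀‖`, where the cut-off field agrees with the
original one. -/

open Set
open scoped NNReal InnerProductSpace

section GlobalSolution
variable {E : Type*} [NormedAddCommGroup E] [NormedSpace ℝ E] [CompleteSpace E]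
  {v : E → E} {K C : ℝ≥0}

lemma exists_hasDerivAt_Ioo_of_lipschitzWith_of_norm_le (hv : LipschitzWith K v)
    (hC : ∀ x, ‖v x‖ ≤ C) (x₀ : E) (T : ℝ) :
    ∃ γ : ℝ → E, γ 0 = x₀ ∧ ∀ t ∈ Ioo (-T) T, HasDerivAt γ (v (γ t)) t := by
  set T' : ℝ≥0 := T.toNNReal
  have hPL : IsPicardLindelof (fun _ => v) (tmin := -T') (tmax := T')
      ⟨0, by simp⟩ x₀ (C * T') 0 C K :=
    .of_time_independent (fun x _ => hC x) hv.lipschitzOnWith (by simp)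
  obtain ⟨γ, hγ0, hγ⟩ := hPL.exists_eq_forall_mem_Icc_hasDerivWithinAt₀
  have hT : Ioo (-T) T ⊆ Ioo (-T' : ℝ) T' :=
    Ioo_subset_Ioo (neg_le_neg (Real.le_coe_toNNReal T)) (Real.le_coe_toNNReal T)
  refine ⟨γ, hγ0, fun t ht => ?_⟩
  have ht' := hT ht
  exact (hγ t (Ioo_subset_Icc_self ht')).hasDerivAt (Icc_mem_nhds ht'.1 ht'.2)

theorem exists_forall_hasDerivAt_of_lipschitzWith_of_norm_le (hv : LipschitzWith K v)
    (hC : ∀ x, ‖v x‖ ≤ C) (x₀ : E) :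
    ∃ γ : ℝ → E, γ 0 = x₀ ∧ ∀ t, HasDerivAt γ (v (γ t)) t := by
  choose α hα0 hα using exists_hasDerivAt_Ioo_of_lipschitzWith_of_norm_le hv hC x₀
  have hagree : ∀ S T, ∀ s ∈ Ioo (-S) S ∩ Ioo (-T) T, α S s = α T s := by
    intro S T s hs
    have hsub : Ioo (-S) S ∩ Ioo (-T) T ⊆ Ioo (-S) S ∧ Ioo (-S) S ∩ Ioo (-T) T ⊆ Ioo (-T) T :=
      ⟨inter_subset_left, inter_subset_right⟩
    rw [Ioo_inter_Ioo] at hs hsub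
    have h0 : (0 : ℝ) ∈ Ioo (-S ⊔ -T) (S ⊓ T) := by
      simp only [mem_Ioo, max_lt_iff, lt_min_iff] at hs ⊢
      refine ⟨⟨?_, ?_⟩, ?_, ?_⟩ <;> linarith
    exact ODE_solution_unique_of_mem_Ioo (v := fun _ => v) (s := fun _ => univ)
      (fun _ _ => hv.lipschitzOnWith) h0 (fun t ht => ⟨hα S t (hsub.1 ht), mem_univ _⟩)
      (fun t ht => ⟨hα T t (hsub.2 ht), mem_univ _⟩) (by rw [hα0, hα0]) hs
  have hmem : ∀ s : ℝ, s ∈ Ioo (-(|s| + 1)) (|s| + 1) := fun s =>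
    ⟨by linarith [neg_abs_le s], by linarith [le_abs_self s]⟩
  refine ⟨fun t => α (|t| + 1) t, by simpa using hα0 1, fun t => ?_⟩
  refine (hα _ t (hmem t)).congr_of_eventuallyEq ?_
  filter_upwards [Ioo_mem_nhds (hmem t).1 (hmem t).2] with s hs
  exact hagree _ _ s ⟨hmem s, hs⟩

end GlobalSolution

section Dissipative
variable {E : Type*} [NormedAddCommGroup E] [InnerProductSpace ℝ E]

lemma norm_le_norm_zero_of_inner_self_nonpos {v : E → E} {γ : ℝ → E}
    (hv : ∀ x, ⟪x, v x⟫_ℝ ≤ 0) (hγ : ∀ t, HasDerivAt γ (v (γ t)) t) {t : ℝ} (ht : 0 ≤ t) :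
    ‖γ t‖ ≤ ‖γ 0‖ := by
  have hanti : Antitone fun s => ‖γ s‖ ^ 2 :=
    antitone_of_hasDerivAt_nonpos (fun s => (hγ s).norm_sq)
      (fun s => mul_nonpos_of_nonneg_of_nonpos zero_le_two (hv (γ s)))
  exact (sq_le_sq₀ (norm_nonneg _) (norm_nonneg _)).1 (hanti ht)

theorem exists_forall_nonneg_hasDerivAt_of_inner_self_nonpos [FiniteDimensional ℝ E]
    {F : E → E} (hF : ContDiff ℝ 1 F) (hdiss : ∀ x, ⟪x, F x⟫_ℝ ≤ 0) (x₀ : E) :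
    ∃ γ : ℝ → E, γ 0 = x₀ ∧ ∀ t, 0 ≤ t → HasDerivAt γ (F (γ t)) t := by
  let φ : ContDiffBump (0 : E) := ⟨‖x₀‖ + 1, ‖x₀‖ + 2, by positivity, by linarith⟩
  set G : E → E := fun x => φ x • F x
  have hG : ContDiff ℝ 1 G := φ.contDiff.smul hF
  have hGc : HasCompactSupport G := φ.hasCompactSupport.smul_right
  obtain ⟨K, hK⟩ := ContDiff.lipschitzWith_of_hasCompactSupport hGc hG one_ne_zero
  obtain ⟨C, hC⟩ := hGc.exists_bound_of_continuous hG.continuous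
  obtain ⟨γ, hγ0, hγ⟩ := exists_forall_hasDerivAt_of_lipschitzWith_of_norm_le hK
    (C := C.toNNReal) (fun x => (hC x).trans (Real.le_coe_toNNReal C)) x₀
  have hGdiss : ∀ x, ⟪x, G x⟫_ℝ ≤ 0 := fun x => by
    rw [inner_smul_right]
    exact mul_nonpos_of_nonneg_of_nonpos φ.nonneg (hdiss x)
  refine ⟨γ, hγ0, fun t ht => ?_⟩
  have hγt : ‖γ t‖ ≤ ‖x₀‖ := hγ0 ▸ norm_le_norm_zero_of_inner_self_nonpos hGdiss hγ ht
  have hφ : φ (γ t) = 1 := φ.one_of_mem_closedBall <|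
    mem_closedBall_zero_iff.2 (hγt.trans (le_add_of_nonneg_right zero_le_one))
  have hGF : G (γ t) = F (γ t) := by simp only [G, hφ, one_smul]
  exact hGF ▸ hγ t

end Dissipative

section Energy
variable {n : ℕ}

lemma frob_eq_sum (X Y : Mat n) : frob X Y = ∑ i, ∑ j, X i j * Y i j := by
  simp [frob, Matrix.trace, Matrix.mul_apply, Matrix.diag]

lemma sqnorm_nonneg (X : Mat n) : 0 ≤ sqnorm X := by
  rw [sqnorm, frob_eq_sum]
  exact Finset.sum_nonneg fun i _ => Finset.sum_nonneg fun j _ => mul_self_nonneg _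

lemma trace_symPart_mul_self (X : Mat n) :
    trace (symPart X * symPart X) = sqnorm (symPart X) := by
  rw [sqnorm, frob, show (symPart X)ᵀ = symPart X by simp [symPart, add_comm]]

lemma bkt_transpose_self_symm (X : Mat n) : (bkt X Xᵀ)ᵀ = bkt X Xᵀ := by
  simp [bkt, transpose_sub, transpose_mul]

lemma frob_bkt_transpose_self (X : Mat n) : frob X (bkt X Xᵀ) = 0 := by
  rw [frob, bkt_transpose_self_symm, bkt, Matrix.mul_sub, trace_sub, ← Matrix.mul_assoc,
    ← Matrix.mul_assoc, trace_mul_cycle X X Xᵀ, trace_mul_cycle Xᵀ X X, sub_self]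

lemma frob_bkt_bkt_transpose_self (X : Mat n) :
    frob X (bkt X (bkt X Xᵀ)) = -sqnorm (bkt X Xᵀ) := by
  set M := bkt X Xᵀ with hM
  have hMt : Mᵀ = M := bkt_transpose_self_symm X
  have h1 : trace (X * (M * Xᵀ)) = trace (M * (Xᵀ * X)) := by
    rw [trace_mul_comm X, Matrix.mul_assoc]
  have h2 : trace (X * (Xᵀ * M)) = trace (M * (X * Xᵀ)) := by
    rw [← Matrix.mul_assoc, trace_mul_comm]
  have h3 : sqnorm M = trace (M * (X * Xᵀ)) - trace (M * (Xᵀ * X)) := by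
    rw [sqnorm, frob, hMt, hM, bkt, Matrix.mul_sub, trace_sub]
  rw [frob, bkt, transpose_sub, transpose_mul, transpose_mul, hMt, Matrix.mul_sub, trace_sub,
    h1, h2, h3, neg_sub]

lemma frob_rhs_self (X : Mat n) :
    frob X (rhs X) = -(sqnorm (symPart X) * sqnorm X) - 1 / 2 * sqnorm (bkt X Xᵀ) := by
  have hlin : frob X (rhs X) = -trace (symPart X * symPart X) * frob X X
      + 1 / 2 * frob X (bkt X (bkt X Xᵀ)) - 1 / 2 * trace X * frob X (bkt X Xᵀ) := by
    simp only [frob, rhs, transpose_sub, transpose_add, transpose_smul, Matrix.mul_sub,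
      Matrix.mul_add, Matrix.mul_smul, trace_sub, trace_add, trace_smul, smul_eq_mul]
  rw [hlin, frob_bkt_bkt_transpose_self, frob_bkt_transpose_self, trace_symPart_mul_self, ← sqnorm]
  ring

lemma frob_rhs_self_nonpos (X : Mat n) : frob X (rhs X) ≤ 0 := by
  have := mul_nonneg (sqnorm_nonneg (symPart X)) (sqnorm_nonneg X)
  have := sqnorm_nonneg (bkt X Xᵀ)
  rw [frob_rhs_self]
  linarith

end Energy

section EuclideanModel
variable {n : ℕ}

/- `Mat n` carries no norm, so the flow runs in `EuclideanSpace ℝ (Fin n × Fin n)`. -/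

def toMat (x : EuclideanSpace ℝ (Fin n × Fin n)) : Mat n := Matrix.of fun i j => x (i, j)

def ofMat (X : Mat n) : EuclideanSpace ℝ (Fin n × Fin n) := WithLp.toLp 2 fun p => X p.1 p.2

lemma toMat_ofMat (X : Mat n) : toMat (ofMat X) = X := rfl

lemma inner_eq_frob_toMat (x y : EuclideanSpace ℝ (Fin n × Fin n)) :
    ⟪x, y⟫_ℝ = frob (toMat x) (toMat y) := by
  simp [PiLp.inner_apply, frob_eq_sum, Fintype.sum_prod_type, toMat, mul_comm]

lemma contDiff_ofMat_rhs_toMat :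
    ContDiff ℝ 1 fun x : EuclideanSpace ℝ (Fin n × Fin n) => ofMat (rhs (toMat x)) := by
  rw [contDiff_piLp]
  rintro ⟨i, j⟩
  simp only [ofMat, toMat, rhs, bkt, symPart, Matrix.sub_apply, Matrix.add_apply,
    Matrix.smul_apply, Matrix.mul_apply, Matrix.trace, Matrix.diag, Matrix.transpose_apply,
    Matrix.of_apply, smul_eq_mul]
  fun_prop

lemma HasDerivAt.toMat_apply {γ : ℝ → EuclideanSpace ℝ (Fin n × Fin n)}
    {v : EuclideanSpace ℝ (Fin n × Fin n)} {t : ℝ} (h : HasDerivAt γ v t) (i j : Fin n) :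
    HasDerivAt (fun s => toMat (γ s) i j) (toMat v i j) t :=
  (EuclideanSpace.proj (𝕜 := ℝ) (i, j)).hasFDerivAt.comp_hasDerivAt t h

end EuclideanModel

theorem stmt8 {n : ℕ} (A₀ : Mat n) :
    ∃ A : ℝ → Mat n, A 0 = A₀ ∧
      ∀ t : ℝ, 0 ≤ t → ∀ i j, HasDerivAt (fun s => A s i j) (rhs (A t) i j) t := by
  have hdiss (x : EuclideanSpace ℝ (Fin n × Fin n)) : ⟪x, ofMat (rhs (toMat x))⟫_ℝ ≤ 0 := by
    rw [inner_eq_frob_toMat, toMat_ofMat]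
    exact frob_rhs_self_nonpos _
  obtain ⟨γ, hγ0, hγ⟩ :=
    exists_forall_nonneg_hasDerivAt_of_inner_self_nonpos contDiff_ofMat_rhs_toMat hdiss (ofMat A₀)
  exact ⟨fun t => toMat (γ t), by simp only [hγ0, toMat_ofMat], fun t ht => (hγ t ht).toMat_apply⟩
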